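/- arXiv:2102.01984 — 2 statements merged into one kernel-verified Lean document; each statement's English description precedes it below -/
import Mathlib

section
/- A quantum DS code with DS minimum distance d̃ can correct any error (E,e) with wt(E,e) ≤ ⌊(d̃−1)/2⌋: if (E,e) and (E',e') both have weight at most ⌊(d̃−1)/2⌋ and produce the same syndrome z_m = ⟨(E,e), S̃_m⟩ for all m, then (E,e)(E',e')⁻¹ ∈ S̃ (i.e., E E'⁻¹ is a stabilizer and e = e'). -/
def sympForm {N : ℕ} (v w : Fin N → ZMod 2 × ZMod 2) : ZMod 2 :=
  ∑ n, ((v n).1 * (w n).2 + (v n).2 * (w n).1)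

/-- Pauli weight: number of non-identity coordinates. -/
def wtG {N : ℕ} (E : Fin N → ZMod 2 × ZMod 2) : ℕ :=
  (Finset.univ.filter (fun n => E n ≠ 0)).card

/-- Hamming weight of a binary vector. -/
def wtb {M : ℕ} (e : Fin M → ZMod 2) : ℕ :=
  (Finset.univ.filter (fun m => e m ≠ 0)).card

lemma sympForm_add {N : ℕ} (v v' w : Fin N → ZMod 2 × ZMod 2) :
    sympForm (v + v') w = sympForm v w + sympForm v' w := by
  unfold sympForm
  rw [← Finset.sum_add_distrib]
  apply Finset.sum_congr rfl
  intro n _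
  simp [Prod.fst_add, Prod.snd_add]
  ring

lemma wtG_add_le {N : ℕ} (E E' : Fin N → ZMod 2 × ZMod 2) :
    wtG (E + E') ≤ wtG E + wtG E' := by
  unfold wtG
  refine le_trans (Finset.card_le_card ?_) (Finset.card_union_le _ _)
  intro n hn
  simp only [Finset.mem_filter, Finset.mem_union, Finset.mem_univ, true_and] at *
  by_contra h
  push_neg at h
  simp [Pi.add_apply, h.1, h.2] at hn

lemma wtb_add_le {M : ℕ} (e e' : Fin M → ZMod 2) :
    wtb (e + e') ≤ wtb e + wtb e' := by
  unfold wtb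
  refine le_trans (Finset.card_le_card ?_) (Finset.card_union_le _ _)
  intro n hn
  simp only [Finset.mem_filter, Finset.mem_union, Finset.mem_univ, true_and] at *
  by_contra h
  push_neg at h
  simp [Pi.add_apply, h.1, h.2] at hn

lemma wtG_eq_zero {N : ℕ} (E : Fin N → ZMod 2 × ZMod 2) (h : wtG E = 0) : E = 0 := by
  funext n
  by_contra hn
  simp only [Pi.zero_apply] at hn
  have : n ∈ Finset.univ.filter (fun n => E n ≠ 0) := by simp [hn]
  rw [Finset.card_eq_zero.mp h] at this
  exact absurd this (Finset.notMem_empty n)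

lemma wtb_eq_zero {M : ℕ} (e : Fin M → ZMod 2) (h : wtb e = 0) : e = 0 := by
  funext n
  by_contra hn
  simp only [Pi.zero_apply] at hn
  have : n ∈ Finset.univ.filter (fun m => e m ≠ 0) := by simp [hn]
  rw [Finset.card_eq_zero.mp h] at this
  exact absurd this (Finset.notMem_empty n)

/-- A DS code with DS minimum distance `d̃` corrects any error of weight
`≤ ⌊(d̃−1)/2⌋`: two such errors with the same syndrome differ by a stabilizer
(and have identical syndrome-error parts).  Paulis mod phase are written
additively in the GF(2) representation, so `E E'⁻¹` is `E + E'`. -/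
theorem dsCode_error_correction {N M : ℕ} (S : Fin M → (Fin N → ZMod 2 × ZMod 2))
    (dtil : ℕ)
    -- `d̃` lower-bounds the weight of every DS codeword outside `S̃ = {(F,0) : F ∈ S}`:
    (hmin : ∀ (F : Fin N → ZMod 2 × ZMod 2) (f : Fin M → ZMod 2),
        (∀ m, sympForm F (S m) + f m = 0) →
        ¬(F ∈ Submodule.span (ZMod 2) (Set.range S) ∧ f = 0) →
        dtil ≤ wtG F + wtb f)
    (E E' : Fin N → ZMod 2 × ZMod 2) (e e' : Fin M → ZMod 2)
    (hw : wtG E + wtb e ≤ (dtil - 1) / 2)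
    (hw' : wtG E' + wtb e' ≤ (dtil - 1) / 2)
    (hsyn : ∀ m, sympForm E (S m) + e m = sympForm E' (S m) + e' m) :
    E + E' ∈ Submodule.span (ZMod 2) (Set.range S) ∧ e = e' := by
  rcases Nat.eq_zero_or_pos dtil with hd | hd
  · -- dtil = 0 forces all weights to be zero, hence all errors zero
    subst hd
    simp only [Nat.zero_sub, Nat.zero_div, Nat.le_zero, Nat.add_eq_zero] at hw hw'
    have hE := wtG_eq_zero E hw.1
    have hE' := wtG_eq_zero E' hw'.1
    have he := wtb_eq_zero e hw.2
    have he' := wtb_eq_zero e' hw'.2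
    subst hE; subst hE'; subst he; subst he'
    exact ⟨by simp [Submodule.zero_mem], rfl⟩
  · set F := E + E' with hF
    set f := e + e' with hf
    have hker : ∀ m, sympForm F (S m) + f m = 0 := by
      intro m
      have h2 : ∀ a : ZMod 2, a + a = 0 := by decide
      rw [hF, hf, sympForm_add, Pi.add_apply]
      calc sympForm E (S m) + sympForm E' (S m) + (e m + e' m)
          = (sympForm E (S m) + e m) + (sympForm E' (S m) + e' m) := by ring
        _ = (sympForm E' (S m) + e' m) + (sympForm E' (S m) + e' m) := by rw [hsyn m]
        _ = 0 := h2 _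
    have key : F ∈ Submodule.span (ZMod 2) (Set.range S) ∧ f = 0 := by
      by_contra hc
      have h1 := hmin F f hker hc
      rw [hF, hf] at h1
      have h2 : wtG (E + E') + wtb (e + e') ≤ (wtG E + wtb e) + (wtG E' + wtb e') := by
        have := wtG_add_le E E'
        have := wtb_add_le e e'
        omega
      omega
    refine ⟨key.1, ?_⟩
    have hf0 : e + e' = 0 := key.2
    funext m
    have h2 : ∀ a b : ZMod 2, a + b = 0 → a = b := by decide
    exact h2 _ _ (congrFun hf0 m)
end

section
/- Let H_X ∈ GF(2)^{M1×N} and H_Z ∈ GF(2)^{M2×N} be parity-check matrices of classical binary codes each with minimum distance at least 3, such that every column of H_X and every column of H_Z has Hamming weight at least 2. Then the induced CSS quantum DS code with check matrix H̃ = [[H_X, I_{M1}, 0, 0],[0, 0, H_Z, I_{M2}]] has DS minimum distance at least 3. -/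
open Matrix

lemma wtb_eq_zero_iff {M : ℕ} {e : Fin M → ZMod 2} : wtb e = 0 ↔ e = 0 := by
  constructor
  · intro h
    funext m
    simp only [Pi.zero_apply]
    by_contra hm
    have hmem : m ∈ Finset.univ.filter (fun m => e m ≠ 0) := by
      simp [hm]
    rw [wtb, Finset.card_eq_zero] at h
    rw [h] at hmem
    exact absurd hmem (Finset.notMem_empty m)
  · intro h
    simp [wtb, h]

lemma aux3 {M N : ℕ} (H : Matrix (Fin M) (Fin N) (ZMod 2))
    (hd : ∀ x : Fin N → ZMod 2, x ≠ 0 → H.mulVec x = 0 → 3 ≤ wtb x)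
    (hc : ∀ n, 2 ≤ (Finset.univ.filter (fun m => H m n ≠ 0)).card)
    (b : Fin N → ZMod 2) (hb : b ≠ 0) :
    3 ≤ wtb b + wtb (H.mulVec b) := by
  have h0 : wtb b ≠ 0 := fun h => hb (wtb_eq_zero_iff.mp h)
  rcases le_or_gt 3 (wtb b) with h | h
  · omega
  by_cases h1 : wtb b = 1
  · obtain ⟨n, hn⟩ := Finset.card_eq_one.mp h1
    have hnmem : n ∈ Finset.univ.filter (fun j => b j ≠ 0) := by
      rw [hn]; exact Finset.mem_singleton_self n
    have hbn0 : b n ≠ 0 := (Finset.mem_filter.mp hnmem).2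
    have hone : ∀ x : ZMod 2, x ≠ 0 → x = 1 := by decide
    have hbn : b n = 1 := hone _ hbn0
    have hbj : ∀ j, j ≠ n → b j = 0 := by
      intro j hj
      by_contra hbj
      have : j ∈ Finset.univ.filter (fun j => b j ≠ 0) := by simp [hbj]
      rw [hn, Finset.mem_singleton] at this
      exact hj this
    have hmv : ∀ m, H.mulVec b m = H m n := by
      intro m
      rw [Matrix.mulVec, dotProduct]
      rw [Finset.sum_eq_single n]
      · rw [hbn, mul_one]
      · intro j _ hj
        rw [hbj j hj, mul_zero]
      · intro hnn; exact absurd (Finset.mem_univ n) hnn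
    have heq : wtb (H.mulVec b) = (Finset.univ.filter (fun m => H m n ≠ 0)).card := by
      unfold wtb
      congr 1
      apply Finset.filter_congr
      intro m _
      simp [hmv m]
    have := hc n
    omega
  · -- wtb b = 2
    have h2 : wtb b = 2 := by omega
    have hne : H.mulVec b ≠ 0 := by
      intro hzero
      have := hd b hb hzero
      omega
    obtain ⟨m, hm⟩ := Function.ne_iff.mp hne
    have hm0 : H.mulVec b m ≠ 0 := hm
    have : 1 ≤ wtb (H.mulVec b) := by
      apply Finset.card_pos.mpr
      exact ⟨m, by simp [hm0]⟩
    omega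

/-- Theorem 2 of the paper: if `H_X` and `H_Z` define classical codes of minimum
distance at least 3 and all their columns have weight at least 2, then the induced
CSS quantum DS code with check matrix `H̃ = [[H_X, I, 0, 0],[0, 0, H_Z, I]]` has
DS minimum distance at least 3.  A DS codeword is `((a,b),(e1,e2))` with
`H_X b + e1 = 0` and `H_Z a + e2 = 0`; its weight is
`#{n : (a n, b n) ≠ (0,0)} + wt(e1) + wt(e2)`, and stabilizer-type codewords are
those with `e1 = 0`, `e2 = 0`, `a` in the row space of `H_X` and `b` in the row
space of `H_Z`. -/
theorem css_ds_min_distance_three {M1 M2 N : ℕ}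
    (HX : Matrix (Fin M1) (Fin N) (ZMod 2)) (HZ : Matrix (Fin M2) (Fin N) (ZMod 2))
    (hdX : ∀ x : Fin N → ZMod 2, x ≠ 0 → HX.mulVec x = 0 → 3 ≤ wtb x)
    (hdZ : ∀ x : Fin N → ZMod 2, x ≠ 0 → HZ.mulVec x = 0 → 3 ≤ wtb x)
    (hcX : ∀ n, 2 ≤ (Finset.univ.filter (fun m => HX m n ≠ 0)).card)
    (hcZ : ∀ n, 2 ≤ (Finset.univ.filter (fun m => HZ m n ≠ 0)).card) :
    ∀ (a b : Fin N → ZMod 2) (e1 : Fin M1 → ZMod 2) (e2 : Fin M2 → ZMod 2),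
      HX.mulVec b + e1 = 0 → HZ.mulVec a + e2 = 0 →
      ¬(e1 = 0 ∧ e2 = 0 ∧ a ∈ Submodule.span (ZMod 2) (Set.range fun m => HX m)
          ∧ b ∈ Submodule.span (ZMod 2) (Set.range fun m => HZ m)) →
      3 ≤ (Finset.univ.filter (fun n => (a n, b n) ≠ (0, 0))).card + wtb e1 + wtb e2 := by
  intro a b e1 e2 h1 h2 hns
  have key : ∀ x y : ZMod 2, x + y = 0 → y = x := by decide
  have he1 : e1 = HX.mulVec b := by
    funext m
    have := congrFun h1 m
    exact key _ _ this
  have he2 : e2 = HZ.mulVec a := by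
    funext m
    have := congrFun h2 m
    exact key _ _ this
  by_cases hb : b = 0
  · by_cases ha : a = 0
    · exact absurd ⟨by rw [he1, hb]; simp, by rw [he2, ha]; simp,
        ha ▸ Submodule.zero_mem _, hb ▸ Submodule.zero_mem _⟩ hns
    · have h3 := aux3 HZ hdZ hcZ a ha
      have hsub : wtb a ≤ (Finset.univ.filter (fun n => (a n, b n) ≠ (0, 0))).card := by
        apply Finset.card_le_card
        intro n hn
        simp only [wtb, Finset.mem_filter, Finset.mem_univ, true_and] at hn ⊢
        intro hcon
        exact hn (by rw [Prod.mk.injEq] at hcon; exact hcon.1)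
      rw [he2]
      omega
  · have h3 := aux3 HX hdX hcX b hb
    have hsub : wtb b ≤ (Finset.univ.filter (fun n => (a n, b n) ≠ (0, 0))).card := by
      apply Finset.card_le_card
      intro n hn
      simp only [wtb, Finset.mem_filter, Finset.mem_univ, true_and] at hn ⊢
      intro hcon
      exact hn (by rw [Prod.mk.injEq] at hcon; exact hcon.2)
    rw [he1]
    omega
end
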